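/- (Closed form of the symmetric sketch-and-project update.) Let A be an n×n real symmetric positive definite matrix, S an n×τ real matrix such that SᵀAS is invertible, and X_k an n×n real symmetric matrix. Define H := S(SᵀAS)⁻¹Sᵀ and X_{k+1} := H + (I − HA) X_k (I − AH). Then: (i) X_{k+1} is symmetric; (ii) SᵀA X_{k+1} = Sᵀ; and (iii) for every n×n real symmetric matrix X satisfying SᵀAX = Sᵀ, one has ‖A^{1/2}(X_{k+1} − X_k)A^{1/2}‖_F ≤ ‖A^{1/2}(X − X_k)A^{1/2}‖_F. That is, X_{k+1} is a minimizer of ‖X − X_k‖_{F(A)} over symmetric X with SᵀAX = Sᵀ. -/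

import Mathlib

/-!
Write `H` for the sketch projector and `X⁺ = H + (I - HA) Xₖ (I - AH)` for the update. If `X` is
symmetric with `SᵀAX = Sᵀ`, then `HAX = XAH = HAH = H`, and these give
`X⁺ - X = (I - HA)(Xₖ - X)(I - AH)`. Conjugating by `B = A^{1/2}` turns `I - HA` into
`Q = I - BHB`, an orthogonal projection, so with `E = B(X - Xₖ)B` we get `B(X⁺ - Xₖ)B = E - QEQ`. Since
`E - QEQ` is Frobenius-orthogonal to `QEQ`, Pythagoras bounds its norm by that of `E`.
-/

open Matrix

section

open scoped ComplexOrder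

noncomputable def Matrix.PosSemidef.sqrt {n : Type*} [Fintype n] [DecidableEq n] {𝕜 : Type*}
    [RCLike 𝕜] {A : Matrix n n 𝕜} (hA : A.PosSemidef) : Matrix n n 𝕜 :=
  hA.1.eigenvectorUnitary.1 * diagonal ((↑) ∘ (√·) ∘ hA.1.eigenvalues) *
  (star hA.1.eigenvectorUnitary : Matrix n n 𝕜)

end

namespace Matrix.PosSemidef

open scoped ComplexOrder

variable {n 𝕜 : Type*} [Fintype n] [DecidableEq n] [RCLike 𝕜] {A : Matrix n n 𝕜}

theorem sqrt_mul_self (hA : A.PosSemidef) : hA.sqrt * hA.sqrt = A := by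
  set U : Matrix n n 𝕜 := hA.1.eigenvectorUnitary.1
  set D : Matrix n n 𝕜 := diagonal ((↑) ∘ (√·) ∘ hA.1.eigenvalues)
  have hU : star U * U = 1 := Unitary.coe_star_mul_self hA.1.eigenvectorUnitary
  calc hA.sqrt * hA.sqrt = U * (D * (star U * U) * D) * star U := by
        simp only [sqrt, U, D, Matrix.mul_assoc]
    _ = A := by
        rw [hU, Matrix.mul_one, diagonal_mul_diagonal]
        conv_rhs => rw [hA.1.spectral_theorem, Unitary.conjStarAlgAut_apply]
        congr 3
        funext i
        simp [← RCLike.ofReal_mul, Real.mul_self_sqrt (hA.eigenvalues_nonneg i)]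

theorem isHermitian_sqrt (hA : A.PosSemidef) : hA.sqrt.IsHermitian := by
  simp [IsHermitian, sqrt, Matrix.star_eq_conjTranspose, Matrix.mul_assoc, Function.comp_def,
    Pi.star_def]

end Matrix.PosSemidef

theorem Matrix.trace_transpose_mul_self_sub_compress_le {ι : Type*} [Fintype ι]
    {Q : Matrix ι ι ℝ} (hQ : IsIdempotentElem Q) (hQt : Qᵀ = Q) (E : Matrix ι ι ℝ) :
    ((E - Q * E * Q)ᵀ * (E - Q * E * Q)).trace ≤ (Eᵀ * E).trace := by
  set D := Q * E * Q
  set F := E - D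
  -- `F` vanishes under the compression `Q ⬝ Q`, which makes it Frobenius-orthogonal to `D`.
  have hQFQ : Q * F * Q = 0 := by
    have hQDQ : Q * D * Q = D := by
      simp only [D, ← Matrix.mul_assoc, hQ.eq]
      simp only [Matrix.mul_assoc, hQ.eq]
    simp only [F, Matrix.mul_sub, Matrix.sub_mul, hQDQ]
    exact sub_self D
  have hFD : (Fᵀ * D).trace = 0 := by
    calc (Fᵀ * D).trace = ((Q * F * Q)ᵀ * E).trace := by
          rw [Matrix.transpose_mul, Matrix.transpose_mul, hQt, ← Matrix.trace_mul_cycle]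
          simp only [D, Matrix.mul_assoc]
      _ = 0 := by rw [hQFQ, Matrix.transpose_zero, Matrix.zero_mul, Matrix.trace_zero]
  have hDF : (Dᵀ * F).trace = 0 := by
    rw [← Matrix.trace_transpose, Matrix.transpose_mul, Matrix.transpose_transpose, hFD]
  have hDD : 0 ≤ (Dᵀ * D).trace := by
    simpa using (posSemidef_conjTranspose_mul_self D).trace_nonneg
  have hE : E = F + D := (sub_add_cancel E D).symm
  calc (Fᵀ * F).trace
        ≤ (Fᵀ * F).trace + (Fᵀ * D).trace + (Dᵀ * F).trace + (Dᵀ * D).trace := by linarith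
    _ = (Eᵀ * E).trace := by
        rw [hE, Matrix.transpose_add, Matrix.add_mul, Matrix.mul_add, Matrix.mul_add]
        simp only [Matrix.trace_add]; ring

section Update

variable {R : Type*} [Ring R]

def sketchUpdate (a h y : R) : R := h + (1 - h * a) * y * (1 - a * h)

theorem sketchUpdate_sub_of_mul_eq {a h x : R} (hhax : h * a * x = h) (hxah : x * a * h = h)
    (hhah : h * a * h = h) (y : R) :
    sketchUpdate a h y - x = (1 - h * a) * (y - x) * (1 - a * h) := by
  have hx : (1 - h * a) * x * (1 - a * h) = x - h := by
    have hexpand : (1 - h * a) * x * (1 - a * h) = x - h * a * x - x * a * h + h * a * x * a * h := by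
      noncomm_ring
    rw [hexpand, hhax, hxah, hhah]; abel
  rw [sketchUpdate, mul_sub (1 - h * a) y x, sub_mul _ _ (1 - a * h), hx]; abel

theorem mul_sketchUpdate_sub_mul_of_mul_self_eq {a b h x : R} (hb : b * b = a)
    (hhax : h * a * x = h) (hxah : x * a * h = h) (hhah : h * a * h = h) (y : R) :
    b * (sketchUpdate a h y - y) * b =
      b * (x - y) * b - (1 - b * h * b) * (b * (x - y) * b) * (1 - b * h * b) := by
  have hsplit : sketchUpdate a h y - y = (x - y) + (1 - h * a) * (y - x) * (1 - a * h) := by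
    rw [← sketchUpdate_sub_of_mul_eq hhax hxah hhah]; abel
  rw [hsplit]; subst hb; noncomm_ring

theorem isIdempotentElem_mul_mul_of_mul_mul_self_eq {b h : R} (hh : h * (b * b) * h = h) :
    IsIdempotentElem (b * h * b) :=
  calc b * h * b * (b * h * b) = b * (h * (b * b) * h) * b := by noncomm_ring
    _ = b * h * b := by rw [hh]

end Update

theorem Matrix.mul_sketchUpdate_of_mul_eq {m k R : Type*} [Fintype m] [DecidableEq m] [Fintype k]
    [Ring R] {a h : Matrix m m R} {s : Matrix k m R} (hs : s * a * h = s) (y : Matrix m m R) :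
    s * a * sketchUpdate a h y = s := by
  have hsa : s * a * (1 - h * a) = 0 := by
    rw [Matrix.mul_sub, Matrix.mul_one, ← Matrix.mul_assoc, hs, sub_self]
  simp only [sketchUpdate, Matrix.mul_add, ← Matrix.mul_assoc, hsa, hs, Matrix.zero_mul, add_zero]

section SketchProjector

variable {m k R : Type*} [Fintype m] [Fintype k] [DecidableEq k] [CommRing R]
  {A : Matrix m m R} {S : Matrix m k R}

noncomputable def Matrix.sketchProjector (A : Matrix m m R) (S : Matrix m k R) : Matrix m m R :=
  S * (Sᵀ * A * S)⁻¹ * Sᵀ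

theorem Matrix.sketchProjector_mul_mul_of_mul_eq {X : Matrix m m R} (hX : Sᵀ * A * X = Sᵀ) :
    A.sketchProjector S * A * X = A.sketchProjector S := by
  simp only [sketchProjector, Matrix.mul_assoc] at hX ⊢
  rw [hX]

theorem Matrix.transpose_mul_mul_sketchProjector (hS : IsUnit (Sᵀ * A * S)) :
    Sᵀ * A * A.sketchProjector S = Sᵀ := by
  rw [sketchProjector, ← Matrix.mul_assoc, ← Matrix.mul_assoc,
    mul_nonsing_inv _ ((isUnit_iff_isUnit_det _).mp hS), Matrix.one_mul]

theorem Matrix.sketchProjector_mul_mul_self (hS : IsUnit (Sᵀ * A * S)) :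
    A.sketchProjector S * A * A.sketchProjector S = A.sketchProjector S :=
  sketchProjector_mul_mul_of_mul_eq (transpose_mul_mul_sketchProjector hS)

theorem Matrix.transpose_sketchProjector (hA : Aᵀ = A) :
    (A.sketchProjector S)ᵀ = A.sketchProjector S := by
  have hSAS : (Sᵀ * A * S)ᵀ = Sᵀ * A * S := by
    rw [Matrix.transpose_mul, Matrix.transpose_mul, transpose_transpose, hA, Matrix.mul_assoc]
  rw [sketchProjector, Matrix.transpose_mul, Matrix.transpose_mul, transpose_transpose,
    transpose_nonsing_inv, hSAS, ← Matrix.mul_assoc]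

theorem Matrix.mul_mul_sketchProjector_of_mul_eq (hA : Aᵀ = A) {X : Matrix m m R} (hXt : Xᵀ = X)
    (hX : Sᵀ * A * X = Sᵀ) : X * A * A.sketchProjector S = A.sketchProjector S := by
  have := congrArg transpose (sketchProjector_mul_mul_of_mul_eq hX)
  rwa [Matrix.transpose_mul, Matrix.transpose_mul, transpose_sketchProjector hA, hA, hXt,
    ← Matrix.mul_assoc] at this

end SketchProjector

theorem Matrix.IsSymm.sketchUpdate {m R : Type*} [Fintype m] [DecidableEq m] [CommRing R]
    {a h y : Matrix m m R} (ha : aᵀ = a) (hh : hᵀ = h) (hy : y.IsSymm) :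
    (_root_.sketchUpdate a h y).IsSymm := by
  simp only [IsSymm, _root_.sketchUpdate, transpose_add, transpose_mul, transpose_sub,
    transpose_one, ha, hh, hy.eq, Matrix.mul_assoc]

/-- (Closed form of the symmetric sketch-and-project update.)
With A symmetric positive definite, SᵀAS invertible, X_k symmetric,
H := S(SᵀAS)⁻¹Sᵀ and X_{k+1} := H + (I − HA)X_k(I − AH), we have:
(i) X_{k+1} is symmetric; (ii) SᵀA X_{k+1} = Sᵀ; and (iii) X_{k+1} minimizes
‖A^{1/2}(X − X_k)A^{1/2}‖_F over all symmetric X with SᵀAX = Sᵀ. -/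
theorem symmetric_sketch_and_project_closed_form {n τ : ℕ}
    (A : Matrix (Fin n) (Fin n) ℝ) (hA : A.PosDef)
    (S : Matrix (Fin n) (Fin τ) ℝ) (hS : IsUnit (Sᵀ * A * S))
    (Xk : Matrix (Fin n) (Fin n) ℝ) (hXk : Xk.IsSymm)
    (H Xk1 : Matrix (Fin n) (Fin n) ℝ)
    (hH : H = S * (Sᵀ * A * S)⁻¹ * Sᵀ)
    (hX1 : Xk1 = H + (1 - H * A) * Xk * (1 - A * H)) :
    Xk1.IsSymm ∧ Sᵀ * A * Xk1 = Sᵀ ∧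
    ∀ X : Matrix (Fin n) (Fin n) ℝ, X.IsSymm → Sᵀ * A * X = Sᵀ →
      Real.sqrt (((hA.posSemidef.sqrt * (Xk1 - Xk) * hA.posSemidef.sqrt)ᵀ *
          (hA.posSemidef.sqrt * (Xk1 - Xk) * hA.posSemidef.sqrt)).trace)
        ≤ Real.sqrt (((hA.posSemidef.sqrt * (X - Xk) * hA.posSemidef.sqrt)ᵀ *
          (hA.posSemidef.sqrt * (X - Xk) * hA.posSemidef.sqrt)).trace) := by
  replace hH : H = A.sketchProjector S := hH
  replace hX1 : Xk1 = sketchUpdate A H Xk := hX1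
  have hAt : Aᵀ = A := by simpa using hA.isHermitian.eq
  have hHt : Hᵀ = H := hH ▸ transpose_sketchProjector hAt
  have hHAH : H * A * H = H := hH ▸ sketchProjector_mul_mul_self hS
  have hSAH : Sᵀ * A * H = Sᵀ := hH ▸ transpose_mul_mul_sketchProjector hS
  refine ⟨hX1 ▸ hXk.sketchUpdate hAt hHt, hX1 ▸ mul_sketchUpdate_of_mul_eq hSAH Xk,
    fun X hX hSX => ?_⟩
  set B := hA.posSemidef.sqrt
  have hBB : B * B = A := hA.posSemidef.sqrt_mul_self
  have hBt : Bᵀ = B := by simpa using hA.posSemidef.isHermitian_sqrt.eq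
  have hQ : IsIdempotentElem (1 - B * H * B) :=
    .one_sub <| isIdempotentElem_mul_mul_of_mul_mul_self_eq <| by rwa [hBB]
  have hQt : (1 - B * H * B)ᵀ = 1 - B * H * B := by
    simp only [transpose_sub, transpose_one, transpose_mul, hBt, hHt, Matrix.mul_assoc]
  rw [hX1, mul_sketchUpdate_sub_mul_of_mul_self_eq hBB
    (hH ▸ sketchProjector_mul_mul_of_mul_eq hSX)
    (hH ▸ mul_mul_sketchProjector_of_mul_eq hAt hX.eq hSX) hHAH]
  exact Real.sqrt_le_sqrt (trace_transpose_mul_self_sub_compress_le hQ hQt _)
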